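/- arXiv:1905.00967 — 4 statements merged into one kernel-verified Lean document; each statement's English description precedes it below -/
import Mathlib

section
/- The isentropic vortex satisfies the steady continuity equation: with the fields ρ, u, v defined below, at every point (x,y) ∈ ℝ² one has ∂_x(ρ u) + ∂_y(ρ v) = 0. -/
open Real

/-- Squared distance from the vortex center `(5,5)`. -/
noncomputable def vortexR2 (x y : ℝ) : ℝ := (x - 5)^2 + (y - 5)^2

/-- Temperature perturbation `δT` of the isentropic (Hu–Shu) vortex. -/
noncomputable def vortexDT (γ ε x y : ℝ) : ℝ :=
  -((γ - 1) * ε^2 / (8 * γ * π^2)) *            exp (1 - vortexR2 x y)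

/-- Density `ρ = (1+δT)^{1/(γ−1)}` of the isentropic vortex. -/
noncomputable def vortexRho (γ ε x y : ℝ) : ℝ :=
  (1 + vortexDT γ ε x y) ^ (1 / (γ - 1))

/-- `x`-velocity `u` of the isentropic vortex. -/
noncomputable def vortexU (ε x y : ℝ) : ℝ :=
  -(ε / (2 * π)) * exp ((1 - vortexR2 x y) / 2) * (y - 5)

/-- `y`-velocity `v` of the isentropic vortex. -/
noncomputable def vortexV (ε x y : ℝ) : ℝ :=
  (ε / (2 * π)) * exp ((1 - vortexR2 x y) / 2) * (x - 5)

/-! The momentum `(ρu, ρv)` is `(-(y - 5), x - 5) · g(r²)` for a single radial profile `g`,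
differentiable because the temperature `1 + δT` stays positive. Hence `∂ₓ(ρu)` and `∂ᵧ(ρv)` are
`∓ 2 (x - 5) (y - 5) g'(r²)` and cancel. -/

theorem deriv_rotational_add_deriv_rotational_eq_zero (g : ℝ → ℝ) (a b x y : ℝ)
    (hg : DifferentiableAt ℝ g ((x - a) ^ 2 + (y - b) ^ 2)) :
    deriv (fun x' => -(y - b) * g ((x' - a) ^ 2 + (y - b) ^ 2)) x
      + deriv (fun y' => (x - a) * g ((x - a) ^ 2 + (y' - b) ^ 2)) y = 0 := by
  have hx : HasDerivAt (fun x' => (x' - a) ^ 2 + (y - b) ^ 2) (2 * (x - a)) x := by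
    simpa using (((hasDerivAt_id x).sub_const a).pow 2).add_const ((y - b) ^ 2)
  have hy : HasDerivAt (fun y' => (x - a) ^ 2 + (y' - b) ^ 2) (2 * (y - b)) y := by
    simpa using (((hasDerivAt_id y).sub_const b).pow 2).const_add ((x - a) ^ 2)
  have hgx : HasDerivAt (fun x' => -(y - b) * g ((x' - a) ^ 2 + (y - b) ^ 2))
      (-(y - b) * (deriv g _ * (2 * (x - a)))) x :=
    (hg.hasDerivAt.comp x hx).const_mul _
  have hgy : HasDerivAt (fun y' => (x - a) * g ((x - a) ^ 2 + (y' - b) ^ 2))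
      ((x - a) * (deriv g _ * (2 * (y - b)))) y :=
    (hg.hasDerivAt.comp y hy).const_mul _
  rw [hgx.deriv, hgy.deriv]
  ring

noncomputable def vortexProfile (γ ε s : ℝ) : ℝ :=
  (1 - (γ - 1) * ε ^ 2 / (8 * γ * π ^ 2) * exp (1 - s)) ^ (1 / (γ - 1))
    * (ε / (2 * π) * exp ((1 - s) / 2))

theorem vortexRho_mul_vortexU (γ ε x y : ℝ) :
    vortexRho γ ε x y * vortexU ε x y = -(y - 5) * vortexProfile γ ε (vortexR2 x y) := by
  rw [vortexRho, vortexDT, vortexU, vortexProfile, neg_mul, ← sub_eq_add_neg]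
  ring

theorem vortexRho_mul_vortexV (γ ε x y : ℝ) :
    vortexRho γ ε x y * vortexV ε x y = (x - 5) * vortexProfile γ ε (vortexR2 x y) := by
  rw [vortexRho, vortexDT, vortexV, vortexProfile, neg_mul, ← sub_eq_add_neg]
  ring

theorem vortex_temperature_pos {γ ε s : ℝ} (hγ : 1 < γ)
    (hε : (γ - 1) * ε ^ 2 * exp 1 < 8 * γ * π ^ 2) (hs : 0 ≤ s) :
    0 < 1 - (γ - 1) * ε ^ 2 / (8 * γ * π ^ 2) * exp (1 - s) := by
  have hden : 0 < 8 * γ * π ^ 2 := by positivity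
  have hk : 0 ≤ (γ - 1) * ε ^ 2 / (8 * γ * π ^ 2) := by
    have : 0 ≤ γ - 1 := by linarith
    positivity
  refine sub_pos.mpr ?_
  calc (γ - 1) * ε ^ 2 / (8 * γ * π ^ 2) * exp (1 - s)
      ≤ (γ - 1) * ε ^ 2 / (8 * γ * π ^ 2) * exp 1 := by gcongr; linarith
    _ = (γ - 1) * ε ^ 2 * exp 1 / (8 * γ * π ^ 2) := by ring
    _ < 1 := (div_lt_one hden).mpr hε

theorem vortexProfile_differentiableAt {γ ε s : ℝ} (hγ : 1 < γ)
    (hε : (γ - 1) * ε ^ 2 * exp 1 < 8 * γ * π ^ 2) (hs : 0 ≤ s) :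
    DifferentiableAt ℝ (vortexProfile γ ε) s := by
  have hbase := (vortex_temperature_pos hγ hε hs).ne'
  unfold vortexProfile
  fun_prop (disch := exact hbase)

/-- The isentropic vortex satisfies the steady continuity equation
`∂_x(ρu) + ∂_y(ρv) = 0` at every point of `ℝ²`. -/
theorem isentropic_vortex_continuity (γ ε : ℝ) (hγ : 1 < γ)
    (hε : (γ - 1) * ε^2 * exp 1 < 8 * γ * π^2) (x y : ℝ) :
    deriv (fun x' => vortexRho γ ε x' y * vortexU ε x' y) x
      + deriv (fun y' => vortexRho γ ε x y' * vortexV ε x y') y = 0 := by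
  simp only [vortexRho_mul_vortexU, vortexRho_mul_vortexV, vortexR2]
  exact deriv_rotational_add_deriv_rotational_eq_zero _ 5 5 x y
    (vortexProfile_differentiableAt hγ hε (by positivity))
end

section
/- The isentropic vortex satisfies the steady momentum equations: with the fields ρ, u, v, p defined below, at every point (x,y) ∈ ℝ² one has ∂_x(ρu² + p) + ∂_y(ρuv) = 0 and ∂_x(ρuv) + ∂_y(ρv² + p) = 0. -/
/-
The vortex is a pure swirl about `(5, 5)`: with `s = r²`, the density and pressure are functions
`R s`, `P s` and the velocity is `W s • (-(y - 5), x - 5)`. For any such flow the divergence of the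
momentum flux is `(x - 5, y - 5) • (2 P'(s) - R(s) W(s)²)`, so the momentum equations reduce to the
cyclostrophic balance `2 P' = R W²`, i.e. `dp/dr = ρ u_θ² / r`. For the isentropic profiles
`ρ = T^{1/(γ-1)}`, `p = T^{γ/(γ-1)}` with `T = 1 + δT` one has `p' = γ/(γ-1) · ρ T'`, and
`T' = (γ-1) ε² / (8γπ²) · e^{1-s}` makes this exactly `ρ W² / 2`. The bound on `ε` keeps `T > 0`,
so the powers are differentiable.
-/

open Real

/-- Pressure `p = (1+δT)^{γ/(γ−1)}` of the isentropic vortex. -/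
noncomputable def vortexP (γ ε x y : ℝ) : ℝ :=
  (1 + vortexDT γ ε x y) ^ (γ / (γ - 1))

def sqDistFrom (a b x y : ℝ) : ℝ := (x - a) ^ 2 + (y - b) ^ 2

section RadialFlow

variable {a b x y : ℝ}

theorem hasDerivAt_comp_sqDistFrom_left {f : ℝ → ℝ}
    (hf : DifferentiableAt ℝ f (sqDistFrom a b x y)) :
    HasDerivAt (fun x' => f (sqDistFrom a b x' y))
      (deriv f (sqDistFrom a b x y) * (2 * (x - a))) x := by
  have hs : HasDerivAt (fun x' => sqDistFrom a b x' y) (2 * (x - a)) x := by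
    simpa [sqDistFrom] using (((hasDerivAt_id x).sub_const a).pow 2).add_const ((y - b) ^ 2)
  exact hf.hasDerivAt.comp x hs

theorem hasDerivAt_comp_sqDistFrom_right {f : ℝ → ℝ}
    (hf : DifferentiableAt ℝ f (sqDistFrom a b x y)) :
    HasDerivAt (fun y' => f (sqDistFrom a b x y'))
      (deriv f (sqDistFrom a b x y) * (2 * (y - b))) y := by
  have hs : HasDerivAt (fun y' => sqDistFrom a b x y') (2 * (y - b)) y := by
    simpa [sqDistFrom] using (((hasDerivAt_id y).sub_const b).pow 2).const_add ((x - a) ^ 2)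
  exact hf.hasDerivAt.comp y hs

theorem momentum_flux_div_eq_zero_of_cyclostrophic {ρ u v p : ℝ → ℝ → ℝ} {R W P : ℝ → ℝ}
    (hρ : ρ = fun x y => R (sqDistFrom a b x y))
    (hu : u = fun x y => -W (sqDistFrom a b x y) * (y - b))
    (hv : v = fun x y => W (sqDistFrom a b x y) * (x - a))
    (hp : p = fun x y => P (sqDistFrom a b x y))
    (hR : DifferentiableAt ℝ R (sqDistFrom a b x y))
    (hW : DifferentiableAt ℝ W (sqDistFrom a b x y))
    (hP : DifferentiableAt ℝ P (sqDistFrom a b x y))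
    (hbal : 2 * deriv P (sqDistFrom a b x y)
      = R (sqDistFrom a b x y) * W (sqDistFrom a b x y) ^ 2) :
    (deriv (fun x' => ρ x' y * u x' y ^ 2 + p x' y) x
      + deriv (fun y' => ρ x y' * u x y' * v x y') y = 0)
    ∧
    (deriv (fun x' => ρ x' y * u x' y * v x' y) x
      + deriv (fun y' => ρ x y' * v x y' ^ 2 + p x y') y = 0) := by
  subst hρ hu hv hp
  have hRx := hasDerivAt_comp_sqDistFrom_left hR
  have hWx := hasDerivAt_comp_sqDistFrom_left hW
  have hPx := hasDerivAt_comp_sqDistFrom_left hP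
  have hRy := hasDerivAt_comp_sqDistFrom_right hR
  have hWy := hasDerivAt_comp_sqDistFrom_right hW
  have hPy := hasDerivAt_comp_sqDistFrom_right hP
  constructor
  · have hx := ((hRx.mul ((hWx.neg.mul_const (y - b)).pow 2)).add hPx).deriv
    have hy := ((hRy.mul (hWy.neg.mul ((hasDerivAt_id y).sub_const b))).mul
      (hWy.mul_const (x - a))).deriv
    simp only [Pi.mul_apply, Pi.neg_apply, Pi.pow_apply, id] at hx hy
    linear_combination (x - a) * hbal + hx + hy
  · have hx := ((hRx.mul (hWx.neg.mul_const (y - b))).mul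
      (hWx.mul ((hasDerivAt_id x).sub_const a))).deriv
    have hy := ((hRy.mul ((hWy.mul_const (x - a)).pow 2)).add hPy).deriv
    simp only [Pi.mul_apply, Pi.neg_apply, Pi.pow_apply, id] at hx hy
    linear_combination (y - b) * hbal + hx + hy

end RadialFlow

section HuShuVortex

variable {γ ε s : ℝ}

noncomputable def vortexTemp (γ ε s : ℝ) : ℝ :=
  1 + -((γ - 1) * ε ^ 2 / (8 * γ * π ^ 2)) * exp (1 - s)

noncomputable def vortexSwirl (ε s : ℝ) : ℝ := ε / (2 * π) * exp ((1 - s) / 2)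

theorem vortexTemp_pos (hγ : 1 < γ) (hε : (γ - 1) * ε ^ 2 * exp 1 < 8 * γ * π ^ 2)
    (hs : 0 ≤ s) : 0 < vortexTemp γ ε s := by
  have hden : 0 < 8 * γ * π ^ 2 := by positivity
  have hk : 0 ≤ (γ - 1) * ε ^ 2 := mul_nonneg (by linarith) (sq_nonneg ε)
  have hexp : exp (1 - s) ≤ exp 1 := exp_le_exp.mpr (by linarith)
  have : (γ - 1) * ε ^ 2 / (8 * γ * π ^ 2) * exp (1 - s) < 1 := by
    rw [div_mul_eq_mul_div, div_lt_one hden]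
    nlinarith [mul_le_mul_of_nonneg_left hexp hk]
  unfold vortexTemp
  linarith

theorem hasDerivAt_vortexTemp :
    HasDerivAt (vortexTemp γ ε) ((γ - 1) * ε ^ 2 / (8 * γ * π ^ 2) * exp (1 - s)) s := by
  refine ((((hasDerivAt_id s).const_sub 1).exp.const_mul
    (-((γ - 1) * ε ^ 2 / (8 * γ * π ^ 2)))).const_add 1).congr_deriv ?_
  simp

theorem vortex_cyclostrophic_balance (hγ : 1 < γ) (hT : 0 < vortexTemp γ ε s) :
    2 * deriv (fun s => vortexTemp γ ε s ^ (γ / (γ - 1))) s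
      = vortexTemp γ ε s ^ (1 / (γ - 1)) * vortexSwirl ε s ^ 2 := by
  have hγ1 : γ - 1 ≠ 0 := by linarith
  have hexponent : γ / (γ - 1) - 1 = 1 / (γ - 1) := by field_simp; ring
  have hswirl : vortexSwirl ε s ^ 2 = ε ^ 2 / (4 * π ^ 2) * exp (1 - s) := by
    rw [vortexSwirl, mul_pow, ← exp_nat_mul]
    ring_nf
  rw [(hasDerivAt_vortexTemp.rpow_const (Or.inl hT.ne')).deriv, hexponent, hswirl]
  field_simp
  ring

end HuShuVortex

/-- The isentropic vortex satisfies the steady momentum equations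
`∂_x(ρu² + p) + ∂_y(ρuv) = 0` and `∂_x(ρuv) + ∂_y(ρv² + p) = 0` at every point. -/
theorem isentropic_vortex_momentum (γ ε : ℝ) (hγ : 1 < γ)
    (hε : (γ - 1) * ε^2 * exp 1 < 8 * γ * π^2) (x y : ℝ) :
    (deriv (fun x' => vortexRho γ ε x' y * (vortexU ε x' y)^2 + vortexP γ ε x' y) x
      + deriv (fun y' => vortexRho γ ε x y' * vortexU ε x y' * vortexV ε x y') y = 0)
    ∧
    (deriv (fun x' => vortexRho γ ε x' y * vortexU ε x' y * vortexV ε x' y) x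
      + deriv (fun y' => vortexRho γ ε x y' * (vortexV ε x y')^2 + vortexP γ ε x y') y = 0) := by
  have hT : 0 < vortexTemp γ ε (sqDistFrom 5 5 x y) :=
    vortexTemp_pos hγ hε (by unfold sqDistFrom; positivity)
  have hTdiff : DifferentiableAt ℝ (vortexTemp γ ε) (sqDistFrom 5 5 x y) :=
    hasDerivAt_vortexTemp.differentiableAt
  refine momentum_flux_div_eq_zero_of_cyclostrophic (W := vortexSwirl ε) rfl ?_ rfl rfl
    (hTdiff.rpow_const (Or.inl hT.ne')) (by unfold vortexSwirl; fun_prop)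
    (hTdiff.rpow_const (Or.inl hT.ne')) (vortex_cyclostrophic_balance hγ hT)
  funext x' y'
  rw [vortexU, vortexSwirl, neg_mul]
  rfl
end

section
/- The isentropic vortex satisfies the steady energy equation: with the fields ρ, u, v, p defined below and total energy density ρE = p/(γ−1) + ρ(u²+v²)/2, at every point (x,y) ∈ ℝ² one has ∂_x(u(ρE + p)) + ∂_y(v(ρE + p)) = 0. -/
open Real

/-- Total energy density `ρE = p/(γ−1) + ρ(u²+v²)/2` of the isentropic vortex
(ideal-gas equation of state). -/
noncomputable def vortexRhoE (γ ε x y : ℝ) : ℝ :=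
  vortexP γ ε x y / (γ - 1)
    + vortexRho γ ε x y * ((vortexU ε x y)^2 + (vortexV ε x y)^2) / 2

/-!
The energy flux `(u, v)(ρE + p)` is a function `Φ` of `r²` times the rotation field
`(-(y - 5), x - 5)`, and every such field is divergence-free: the chain rule produces the terms
`∓ 2 Φ'(r²) (x - 5)(y - 5)`, which cancel. The bound on `ε` keeps `1 + δT` positive, so that the
powers `(1 + δT)^q` in `Φ` are differentiable.
-/

section Swirl

variable {Φ : ℝ → ℝ} {a b x y : ℝ}

theorem deriv_swirl_add_deriv_swirl_eq_zero
    (hΦ : DifferentiableAt ℝ Φ ((x - a)^2 + (y - b)^2)) :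
    deriv (fun x' => -Φ ((x' - a)^2 + (y - b)^2) * (y - b)) x
      + deriv (fun y' => Φ ((x - a)^2 + (y' - b)^2) * (x - a)) y = 0 := by
  have hx : HasDerivAt (fun x' => (x' - a)^2 + (y - b)^2) (2 * (x - a)) x := by
    simpa using (((hasDerivAt_id x).sub_const a).pow 2).add_const ((y - b)^2)
  have hy : HasDerivAt (fun y' => (x - a)^2 + (y' - b)^2) (2 * (y - b)) y := by
    simpa using (((hasDerivAt_id y).sub_const b).pow 2).const_add ((x - a)^2)
  have hu : HasDerivAt (fun x' => -Φ ((x' - a)^2 + (y - b)^2) * (y - b))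
      (-(deriv Φ ((x - a)^2 + (y - b)^2) * (2 * (x - a))) * (y - b)) x :=
    (hΦ.hasDerivAt.comp x hx).neg.mul_const (y - b)
  have hv : HasDerivAt (fun y' => Φ ((x - a)^2 + (y' - b)^2) * (x - a))
      (deriv Φ ((x - a)^2 + (y - b)^2) * (2 * (y - b)) * (x - a)) y :=
    (hΦ.hasDerivAt.comp y hy).mul_const (x - a)
  rw [hu.deriv, hv.deriv]
  ring

end Swirl

namespace IsentropicVortex

noncomputable def dtProfile (γ ε s : ℝ) : ℝ :=
  -((γ - 1) * ε^2 / (8 * γ * π^2)) * exp (1 - s)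

/-- The energy flux `(u, v)(ρE + p)` equals `fluxProfile γ ε r² · (-(y - 5), x - 5)`. -/
noncomputable def fluxProfile (γ ε s : ℝ) : ℝ :=
  ε / (2 * π) * exp ((1 - s) / 2) *
    ((1 + dtProfile γ ε s) ^ (γ / (γ - 1)) / (γ - 1)
      + (1 + dtProfile γ ε s) ^ (1 / (γ - 1)) * ((ε / (2 * π))^2 * exp (1 - s) * s) / 2
      + (1 + dtProfile γ ε s) ^ (γ / (γ - 1)))

theorem one_add_dtProfile_pos {γ ε s : ℝ} (hγ : 0 < γ)
    (hε : (γ - 1) * ε^2 * exp 1 < 8 * γ * π^2) (hs : 0 ≤ s) :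
    0 < 1 + dtProfile γ ε s := by
  have hden : 0 < 8 * γ * π^2 := by positivity
  have hexp : exp (1 - s) ≤ exp 1 := exp_le_exp.mpr (by linarith)
  have hbound : (γ - 1) * ε^2 * exp (1 - s) < 8 * γ * π^2 := by
    rcases le_total (γ - 1) 0 with hneg | hnonneg
    · nlinarith [mul_nonpos_of_nonpos_of_nonneg hneg (sq_nonneg ε), exp_pos (1 - s)]
    · nlinarith [mul_nonneg hnonneg (sq_nonneg ε)]
  rw [dtProfile, neg_mul, ← sub_eq_add_neg, sub_pos, div_mul_eq_mul_div, div_lt_one hden]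
  exact hbound

theorem differentiableAt_fluxProfile {γ ε s : ℝ} (hs : 1 + dtProfile γ ε s ≠ 0) :
    DifferentiableAt ℝ (fluxProfile γ ε) s := by
  have hbase : DifferentiableAt ℝ (fun s => 1 + dtProfile γ ε s) s := by
    unfold dtProfile; fun_prop
  have hp := hbase.rpow_const (p := γ / (γ - 1)) (Or.inl hs)
  have hρ := hbase.rpow_const (p := 1 / (γ - 1)) (Or.inl hs)
  unfold fluxProfile
  fun_prop

theorem vortexU_sq_add_vortexV_sq (ε x y : ℝ) :
    vortexU ε x y ^ 2 + vortexV ε x y ^ 2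
      = (ε / (2 * π))^2 * exp (1 - vortexR2 x y) * vortexR2 x y := by
  have hexp : exp (1 - vortexR2 x y) = exp ((1 - vortexR2 x y) / 2) ^ 2 := by
    rw [← exp_nat_mul]; ring_nf
  rw [hexp, vortexU, vortexV, vortexR2]
  ring

theorem vortexU_mul_energyFlux (γ ε x y : ℝ) :
    vortexU ε x y * (vortexRhoE γ ε x y + vortexP γ ε x y)
      = -fluxProfile γ ε ((x - 5)^2 + (y - 5)^2) * (y - 5) := by
  rw [vortexRhoE, vortexU_sq_add_vortexV_sq, vortexU, fluxProfile]
  simp only [vortexP, vortexRho, vortexDT, dtProfile, vortexR2]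
  ring

theorem vortexV_mul_energyFlux (γ ε x y : ℝ) :
    vortexV ε x y * (vortexRhoE γ ε x y + vortexP γ ε x y)
      = fluxProfile γ ε ((x - 5)^2 + (y - 5)^2) * (x - 5) := by
  rw [vortexRhoE, vortexU_sq_add_vortexV_sq, vortexV, fluxProfile]
  simp only [vortexP, vortexRho, vortexDT, dtProfile, vortexR2]
  ring

end IsentropicVortex

open IsentropicVortex in
/-- The isentropic vortex satisfies the steady energy equation
`∂_x(u(ρE + p)) + ∂_y(v(ρE + p)) = 0` at every point. -/
theorem isentropic_vortex_energy (γ ε : ℝ) (hγ : 1 < γ)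
    (hε : (γ - 1) * ε^2 * exp 1 < 8 * γ * π^2) (x y : ℝ) :
    deriv (fun x' => vortexU ε x' y * (vortexRhoE γ ε x' y + vortexP γ ε x' y)) x
      + deriv (fun y' => vortexV ε x y' * (vortexRhoE γ ε x y' + vortexP γ ε x y')) y
      = 0 := by
  have hpos := one_add_dtProfile_pos (s := (x - 5)^2 + (y - 5)^2) (by linarith) hε
    (by positivity)
  simp only [vortexU_mul_energyFlux, vortexV_mul_energyFlux]
  exact deriv_swirl_add_deriv_swirl_eq_zero (differentiableAt_fluxProfile hpos.ne')
end

section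
/- Fourth-order Cauchy–Kovalevskaya identity along trajectories: let E be a real Banach space, v : E → E three times continuously differentiable (ContDiff ℝ 3), and x : ℝ → E a solution of the autonomous ODE dx/dt = v(x(t)). Then x is four times differentiable and, writing w = v(x(t)) and Dv, D²v, D³v for the Fréchet derivatives of v at x(t), d⁴x/dt⁴(t) = D³v(w, w, w) + D²v(Dv(w), w) + 2·D²v(w, Dv(w)) + Dv(D²v(w, w)) + Dv(Dv(Dv(w))) for every t. -/
/-- Fourth-order Cauchy–Kovalevskaya identity along trajectories: if `v : E → E` is
`C³` on a real Banach space `E` and `x : ℝ → E` solves `dx/dt = v(x(t))`, then `x` is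
four times differentiable and, with `w = v(x(t))`,
`d⁴x/dt⁴(t) = D³v(w,w,w) + D²v(Dv(w), w) + 2·D²v(w, Dv(w)) + Dv(D²v(w,w)) + Dv(Dv(Dv(w)))`
for every `t`. -/
theorem cauchy_kovalevskaya_fourth_order
    {E : Type*} [NormedAddCommGroup E] [NormedSpace ℝ E] [CompleteSpace E]
    (v : E → E) (hv : ContDiff ℝ 3 v)
    (x : ℝ → E) (hx : ∀ t : ℝ, HasDerivAt x (v (x t)) t) :
    ∀ t : ℝ, HasDerivAt (deriv (deriv (deriv x)))
      (fderiv ℝ (fderiv ℝ (fderiv ℝ v)) (x t) (v (x t)) (v (x t)) (v (x t))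
        + fderiv ℝ (fderiv ℝ v) (x t) (fderiv ℝ v (x t) (v (x t))) (v (x t))
        + (2 : ℝ) • fderiv ℝ (fderiv ℝ v) (x t) (v (x t)) (fderiv ℝ v (x t) (v (x t)))
        + fderiv ℝ v (x t) (fderiv ℝ (fderiv ℝ v) (x t) (v (x t)) (v (x t)))
        + fderiv ℝ v (x t) (fderiv ℝ v (x t) (fderiv ℝ v (x t) (v (x t))))) t := by
  have hvd : Differentiable ℝ v := hv.differentiable (by norm_num)
  have hv1 : ContDiff ℝ 2 (fderiv ℝ v) := hv.fderiv_right (by norm_num)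
  have hv2 : ContDiff ℝ 1 (fderiv ℝ (fderiv ℝ v)) := hv1.fderiv_right (by norm_num)
  have hAd : Differentiable ℝ (fderiv ℝ v) := hv1.differentiable (by norm_num)
  have hBd : Differentiable ℝ (fderiv ℝ (fderiv ℝ v)) := hv2.differentiable (by norm_num)
  set A : ℝ → E →L[ℝ] E := fun s => fderiv ℝ v (x s) with hAdef
  set B : ℝ → E →L[ℝ] E →L[ℝ] E := fun s => fderiv ℝ (fderiv ℝ v) (x s) with hBdef
  set C : ℝ → E →L[ℝ] E →L[ℝ] E →L[ℝ] E :=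
    fun s => fderiv ℝ (fderiv ℝ (fderiv ℝ v)) (x s) with hCdef
  have hw : ∀ s, HasDerivAt (fun u => v (x u)) (A s (v (x s))) s := fun s =>
    (hvd (x s)).hasFDerivAt.comp_hasDerivAt s (hx s)
  have hA : ∀ s, HasDerivAt A (B s (v (x s))) s := fun s =>
    (hAd (x s)).hasFDerivAt.comp_hasDerivAt s (hx s)
  have hB : ∀ s, HasDerivAt B (C s (v (x s))) s := fun s =>
    (hBd (x s)).hasFDerivAt.comp_hasDerivAt s (hx s)
  have e1 : deriv x = fun s => v (x s) := funext fun s => (hx s).deriv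
  have h2 : ∀ s, HasDerivAt (deriv x) (A s (v (x s))) s := by
    rw [e1]; exact hw
  have e2 : deriv (deriv x) = fun s => A s (v (x s)) := funext fun s => (h2 s).deriv
  have h3 : ∀ s, HasDerivAt (deriv (deriv x))
      (B s (v (x s)) (v (x s)) + A s (A s (v (x s)))) s := by
    rw [e2]; exact fun s => (hA s).clm_apply (hw s)
  have e3 : deriv (deriv (deriv x))
      = fun s => B s (v (x s)) (v (x s)) + A s (A s (v (x s))) :=
    funext fun s => (h3 s).deriv
  intro t
  rw [e3]
  have hBw : HasDerivAt (fun s => B s (v (x s)))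
      (C t (v (x t)) (v (x t)) + B t (A t (v (x t)))) t := (hB t).clm_apply (hw t)
  have hAw : HasDerivAt (fun s => A s (v (x s)))
      (B t (v (x t)) (v (x t)) + A t (A t (v (x t)))) t := (hA t).clm_apply (hw t)
  have part1 := hBw.clm_apply (hw t)
  have part2 := (hA t).clm_apply hAw
  have hsum := part1.add part2
  convert hsum using 1
  · rfl
  simp only [ContinuousLinearMap.add_apply, map_add, two_smul]
  abel
end
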